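/- Let c ∈ (0,√2) and p ∈ (0,1) with p < p₀. Then L(c,p,θ) ∈ (0, 1/2 + κ₂/(2κ₁)) for every θ ∈ (−∞, θ₂). -/
import Mathlib


open Real Filter Set

/-- `ξ = p c⁴ / 4`. -/
noncomputable def xiPar (c p : ℝ) : ℝ := p * c ^ 4 / 4

/-- `κ₁ = √((c² − √(c⁴ − 4ξ))/2)`. -/
noncomputable def kappa1 (c p : ℝ) : ℝ :=
  Real.sqrt ((c ^ 2 - Real.sqrt (c ^ 4 - 4 * xiPar c p)) / 2)

/-- `κ₂ = √((c² + √(c⁴ − 4ξ))/2)`. -/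
noncomputable def kappa2 (c p : ℝ) : ℝ :=
  Real.sqrt ((c ^ 2 + Real.sqrt (c ^ 4 - 4 * xiPar c p)) / 2)

/-- The function `L(c,p,θ)` from the paper. -/
noncomputable def Lfun (c p θ : ℝ) : ℝ :=
  (1 / 2) * (1 + kappa2 c p / kappa1 c p)
  + (1 / Real.pi) * Real.arctan
      ((kappa2 c p * (-(kappa1 c p) ^ 2 + xiPar c p + xiPar c p * θ * Real.sqrt (2 - c ^ 2))) /
       (xiPar c p * (θ * (kappa1 c p) ^ 2 + Real.sqrt (2 - c ^ 2) + θ * (1 - c ^ 2))))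
  - (kappa2 c p / (kappa1 c p * Real.pi)) * Real.arctan
      ((kappa1 c p * (-(kappa2 c p) ^ 2 + xiPar c p + xiPar c p * θ * Real.sqrt (2 - c ^ 2))) /
       (xiPar c p * (θ * (kappa2 c p) ^ 2 + Real.sqrt (2 - c ^ 2) + θ * (1 - c ^ 2))))

/-- The discontinuity point `θ₁ = −2√(2−c²)/(2−c² − c²√(1−p))`. -/
noncomputable def theta1 (c p : ℝ) : ℝ :=
  -2 * Real.sqrt (2 - c ^ 2) / (2 - c ^ 2 - c ^ 2 * Real.sqrt (1 - p))

/-- The discontinuity point `θ₂ = −2√(2−c²)/(2−c² + c²√(1−p))`. -/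
noncomputable def theta2 (c p : ℝ) : ℝ :=
  -2 * Real.sqrt (2 - c ^ 2) / (2 - c ^ 2 + c ^ 2 * Real.sqrt (1 - p))

/-- The threshold `p₀ = 4(c²−1)/c⁴`. -/
noncomputable def p0 (c : ℝ) : ℝ := 4 * (c ^ 2 - 1) / c ^ 4

set_option maxHeartbeats 1000000 in
lemma core_ineq (x y s θ : ℝ) (hx : 0 < x) (hxy : x < y) (hs : 0 < s)
    (ha : x ^ 2 < 1) (hb : 1 < y ^ 2) (hθ : θ * (1 - x ^ 2) < -s) :
    x * (-y ^ 2 + x ^ 2 * y ^ 2 + x ^ 2 * y ^ 2 * θ * s) * (θ * (1 - y ^ 2) + s)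
      < y * (-x ^ 2 + x ^ 2 * y ^ 2 + x ^ 2 * y ^ 2 * θ * s) * (θ * (1 - x ^ 2) + s) := by
  have hy : 0 < y := hx.trans hxy
  have hm0 : 0 < x * y := mul_pos hx hy
  have ha1 : (0:ℝ) < 1 - x ^ 2 := by linarith
  have hQms : 0 < s * (x*y) * (1+x*y) * s ^ 2 - (s ^ 2 * (x*y) - (y ^ 2 - 1) * (1 - x ^ 2)) * (1 - x ^ 2) * s
      + s * (1+x*y) * (1 - x ^ 2) ^ 2 := by
    have e : s * (x*y) * (1+x*y) * s ^ 2 - (s ^ 2 * (x*y) - (y ^ 2 - 1) * (1 - x ^ 2)) * (1 - x ^ 2) * s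
        + s * (1+x*y) * (1 - x ^ 2) ^ 2
        = s * (s ^ 2 * (x*y) * (x*y + x ^ 2) + (1 - x ^ 2) ^ 2 * (y ^ 2 + x*y)) := by ring
    rw [e]; positivity
  have hslope : s * (x*y) * (1+x*y) * (θ * (1 - x ^ 2) - s)
      + (s ^ 2 * (x*y) - (y ^ 2 - 1) * (1 - x ^ 2)) * (1 - x ^ 2) < 0 := by
    have h1 : s * (x*y) * (1+x*y) * (θ * (1 - x ^ 2) - s) < s * (x*y) * (1+x*y) * (-2 * s) := by
      apply mul_lt_mul_of_pos_left _ (by positivity)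
      linarith
    have h2 : (s ^ 2 * (x*y) - (y ^ 2 - 1) * (1 - x ^ 2)) * (1 - x ^ 2) < 2 * (s ^ 2 * (x*y)) * (1 + x*y) := by
      have p1 : 0 < s ^ 2 * (x*y) := by positivity
      have p2 : 0 ≤ (y ^ 2 - 1) * (1 - x ^ 2) ^ 2 := by
        apply mul_nonneg (by linarith) (sq_nonneg _)
      nlinarith [mul_pos p1 hx, mul_pos p1 hm0, mul_pos p1 ha1]
    nlinarith
  have hQ : 0 < s * (x*y) * (1+x*y) * (θ * (1 - x ^ 2)) ^ 2
      + (s ^ 2 * (x*y) - (y ^ 2 - 1) * (1 - x ^ 2)) * (1 - x ^ 2) * (θ * (1 - x ^ 2))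
      + s * (1+x*y) * (1 - x ^ 2) ^ 2 := by
    have key : s * (x*y) * (1+x*y) * (θ * (1 - x ^ 2)) ^ 2
        + (s ^ 2 * (x*y) - (y ^ 2 - 1) * (1 - x ^ 2)) * (1 - x ^ 2) * (θ * (1 - x ^ 2))
        + s * (1+x*y) * (1 - x ^ 2) ^ 2
        = (s * (x*y) * (1+x*y) * s ^ 2 - (s ^ 2 * (x*y) - (y ^ 2 - 1) * (1 - x ^ 2)) * (1 - x ^ 2) * s
            + s * (1+x*y) * (1 - x ^ 2) ^ 2)
          + (θ * (1 - x ^ 2) + s) * (s * (x*y) * (1+x*y) * (θ * (1 - x ^ 2) - s)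
            + (s ^ 2 * (x*y) - (y ^ 2 - 1) * (1 - x ^ 2)) * (1 - x ^ 2)) := by ring
    have hus : θ * (1 - x ^ 2) + s < 0 := by linarith
    have := mul_pos_of_neg_of_neg hus hslope
    linarith
  have hid : (y * (-x ^ 2 + x ^ 2 * y ^ 2 + x ^ 2 * y ^ 2 * θ * s) * (θ * (1 - x ^ 2) + s)
        - x * (-y ^ 2 + x ^ 2 * y ^ 2 + x ^ 2 * y ^ 2 * θ * s) * (θ * (1 - y ^ 2) + s))
        * (1 - x ^ 2) ^ 2
      = (y - x) * (x * y) * (s * (x*y) * (1+x*y) * (θ * (1 - x ^ 2)) ^ 2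
          + (s ^ 2 * (x*y) - (y ^ 2 - 1) * (1 - x ^ 2)) * (1 - x ^ 2) * (θ * (1 - x ^ 2))
          + s * (1+x*y) * (1 - x ^ 2) ^ 2) := by ring
  have h3 := mul_pos (mul_pos (sub_pos.mpr hxy) hm0) hQ
  rw [← hid] at h3
  nlinarith [sq_nonneg (1 - x ^ 2), mul_pos ha1 ha1]


lemma frac_lt (n1 d1 n2 d2 K : ℝ) (hK : 0 < K) (hd1 : 0 < d1) (hd2 : d2 < 0)
    (hn2 : n2 < 0) (h : n2 * d1 < n1 * d2) : n1 / (K * d1) < n2 / (K * d2) := by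
  have h2 : n2 / (K * d2) = (-n2) / (-(K * d2)) := (neg_div_neg_eq _ _).symm
  rw [h2]
  rw [div_lt_div_iff₀ (mul_pos hK hd1) (by nlinarith [mul_pos_of_neg_of_neg hd2 (neg_neg_of_pos hK)] : (0:ℝ) < -(K * d2))]
  nlinarith [mul_lt_mul_of_pos_left h hK]

set_option maxHeartbeats 1000000 in
/-- For `c ∈ (0,√2)`, `p ∈ (0,1)` with `p < p₀`:
`L(c,p,θ) ∈ (0, 1/2 + κ₂/(2κ₁))` for every `θ ∈ (−∞, θ₂)`. -/
theorem stmt13 (c p : ℝ) (hc : c ∈ Set.Ioo 0 (Real.sqrt 2)) (hp : p ∈ Set.Ioo 0 1)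
    (hpp : p < p0 c) :
    ∀ θ ∈ Set.Iio (theta2 c p),
      Lfun c p θ ∈ Set.Ioo (0 : ℝ) (1 / 2 + kappa2 c p / (2 * kappa1 c p)) := by
  obtain ⟨hc0, hcs⟩ := hc
  obtain ⟨hp0, hp1⟩ := hp
  have hc2lt : c ^ 2 < 2 := by
    have h2 : Real.sqrt 2 * Real.sqrt 2 = 2 := Real.mul_self_sqrt (by norm_num)
    nlinarith [mul_lt_mul_of_pos_left hcs hc0, mul_lt_mul_of_pos_right hcs (hc0.trans hcs)]
  have hc4 : 0 < c ^ 4 := by positivity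
  have hc21 : 1 < c ^ 2 := by
    have h1 : 0 < 4 * (c ^ 2 - 1) / c ^ 4 := hp0.trans hpp
    rcases div_pos_iff.mp h1 with ⟨h, _⟩ | ⟨_, h⟩
    · linarith
    · linarith
  set q := Real.sqrt (1 - p) with hqdef
  have hq2 : q ^ 2 = 1 - p := Real.sq_sqrt (by linarith)
  have hq0 : 0 < q := Real.sqrt_pos.mpr (by linarith)
  have hq1 : q < 1 := by nlinarith
  have hkey : 2 - c ^ 2 < c ^ 2 * q := by
    have hpc : p * c ^ 4 < 4 * (c ^ 2 - 1) := by
      have h0 : p < 4 * (c ^ 2 - 1) / c ^ 4 := by rw [p0] at hpp; exact hpp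
      have := (lt_div_iff₀ hc4).mp h0
      linarith
    nlinarith [mul_pos (mul_pos hc4 hq0) hq0, sq_nonneg (c ^ 2 * q - (2 - c ^ 2)), mul_pos hc4 hq0]
  have hsqin : Real.sqrt (c ^ 4 - 4 * xiPar c p) = c ^ 2 * q := by
    have e : c ^ 4 - 4 * xiPar c p = (c ^ 2 * q) ^ 2 := by
      rw [xiPar]; linear_combination (-(c ^ 4)) * hq2
    rw [e, Real.sqrt_sq (by positivity)]
  set k1 := kappa1 c p with hk1def
  set k2 := kappa2 c p with hk2def
  have hk1 : k1 = Real.sqrt ((c ^ 2 - c ^ 2 * q) / 2) := by rw [hk1def, kappa1, hsqin]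
  have hk2 : k2 = Real.sqrt ((c ^ 2 + c ^ 2 * q) / 2) := by rw [hk2def, kappa2, hsqin]
  have hapos : 0 < (c ^ 2 - c ^ 2 * q) / 2 := by nlinarith
  have hbpos : 0 < (c ^ 2 + c ^ 2 * q) / 2 := by nlinarith
  have k1pos : 0 < k1 := by rw [hk1]; exact Real.sqrt_pos.mpr hapos
  have k2pos : 0 < k2 := by rw [hk2]; exact Real.sqrt_pos.mpr hbpos
  have k1sq : k1 ^ 2 = (c ^ 2 - c ^ 2 * q) / 2 := by rw [hk1]; exact Real.sq_sqrt hapos.le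
  have k2sq : k2 ^ 2 = (c ^ 2 + c ^ 2 * q) / 2 := by rw [hk2]; exact Real.sq_sqrt hbpos.le
  have hk12 : k1 < k2 := by
    rw [hk1, hk2]
    apply Real.sqrt_lt_sqrt hapos.le
    nlinarith
  have ha1 : k1 ^ 2 < 1 := by rw [k1sq]; nlinarith
  have hb1 : 1 < k2 ^ 2 := by rw [k2sq]; nlinarith
  have hxi : xiPar c p = k1 ^ 2 * k2 ^ 2 := by
    rw [xiPar, k1sq, k2sq]; linear_combination (c ^ 4 / 4) * hq2
  have hc2eq : c ^ 2 = k1 ^ 2 + k2 ^ 2 := by rw [k1sq, k2sq]; ring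
  set s := Real.sqrt (2 - c ^ 2) with hsdef
  have hs0 : 0 < s := Real.sqrt_pos.mpr (by linarith)
  have hθ2 : theta2 c p = -s / (1 - k1 ^ 2) := by
    rw [theta2, k1sq, ← hqdef, ← hsdef]
    rw [div_eq_div_iff (by nlinarith) (by nlinarith)]
    ring
  intro θ hθ
  rw [Set.mem_Iio, hθ2] at hθ
  have h1a : (0:ℝ) < 1 - k1 ^ 2 := by linarith
  have hu : θ * (1 - k1 ^ 2) < -s := (lt_div_iff₀ h1a).mp hθ
  have θneg : θ < 0 := by
    have hd : -s / (1 - k1 ^ 2) < 0 := div_neg_of_neg_of_pos (by linarith) h1a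
    linarith
  have hK : 0 < k1 ^ 2 * k2 ^ 2 := by positivity
  rw [Set.mem_Ioo]
  simp only [Lfun, hxi, ← hk1def, ← hk2def, ← hsdef, ← hqdef]
  rw [hc2eq]
  have hD1 : 0 < θ * k1 ^ 2 + s + θ * (1 - (k1 ^ 2 + k2 ^ 2)) := by
    nlinarith [mul_pos_of_neg_of_neg θneg (by linarith : 1 - k2 ^ 2 < 0)]
  have hD2 : θ * k2 ^ 2 + s + θ * (1 - (k1 ^ 2 + k2 ^ 2)) < 0 := by nlinarith [hu]
  have hN2 : k1 * (-k2 ^ 2 + k1 ^ 2 * k2 ^ 2 + k1 ^ 2 * k2 ^ 2 * θ * s) < 0 := by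
    have t1 : k1 ^ 2 * k2 ^ 2 * θ * s < 0 :=
      mul_neg_of_neg_of_pos (mul_neg_of_pos_of_neg hK θneg) hs0
    have t2 : -k2 ^ 2 + k1 ^ 2 * k2 ^ 2 < 0 := by nlinarith
    exact mul_neg_of_pos_of_neg k1pos (by linarith)
  have hcore := core_ineq k1 k2 s θ k1pos hk12 hs0 ha1 hb1 hu
  have hAB : (k2 * (-k1 ^ 2 + k1 ^ 2 * k2 ^ 2 + k1 ^ 2 * k2 ^ 2 * θ * s)) /
        (k1 ^ 2 * k2 ^ 2 * (θ * k1 ^ 2 + s + θ * (1 - (k1 ^ 2 + k2 ^ 2))))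
      < (k1 * (-k2 ^ 2 + k1 ^ 2 * k2 ^ 2 + k1 ^ 2 * k2 ^ 2 * θ * s)) /
        (k1 ^ 2 * k2 ^ 2 * (θ * k2 ^ 2 + s + θ * (1 - (k1 ^ 2 + k2 ^ 2)))) := by
    apply frac_lt _ _ _ _ _ hK hD1 hD2 hN2
    have el : k1 * (-k2 ^ 2 + k1 ^ 2 * k2 ^ 2 + k1 ^ 2 * k2 ^ 2 * θ * s) *
        (θ * k1 ^ 2 + s + θ * (1 - (k1 ^ 2 + k2 ^ 2)))
        = k1 * (-k2 ^ 2 + k1 ^ 2 * k2 ^ 2 + k1 ^ 2 * k2 ^ 2 * θ * s) * (θ * (1 - k2 ^ 2) + s) := by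
      ring
    have er : k2 * (-k1 ^ 2 + k1 ^ 2 * k2 ^ 2 + k1 ^ 2 * k2 ^ 2 * θ * s) *
        (θ * k2 ^ 2 + s + θ * (1 - (k1 ^ 2 + k2 ^ 2)))
        = k2 * (-k1 ^ 2 + k1 ^ 2 * k2 ^ 2 + k1 ^ 2 * k2 ^ 2 * θ * s) * (θ * (1 - k1 ^ 2) + s) := by
      ring
    rw [el, er]
    exact hcore
  clear hcore
  have hBpos : 0 < (k1 * (-k2 ^ 2 + k1 ^ 2 * k2 ^ 2 + k1 ^ 2 * k2 ^ 2 * θ * s)) /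
        (k1 ^ 2 * k2 ^ 2 * (θ * k2 ^ 2 + s + θ * (1 - (k1 ^ 2 + k2 ^ 2)))) :=
    div_pos_iff.mpr (Or.inr ⟨hN2, mul_neg_of_pos_of_neg hK hD2⟩)
  have hπ : (0:ℝ) < Real.pi := Real.pi_pos
  set A := (k2 * (-k1 ^ 2 + k1 ^ 2 * k2 ^ 2 + k1 ^ 2 * k2 ^ 2 * θ * s)) /
        (k1 ^ 2 * k2 ^ 2 * (θ * k1 ^ 2 + s + θ * (1 - (k1 ^ 2 + k2 ^ 2)))) with hAdef
  set B := (k1 * (-k2 ^ 2 + k1 ^ 2 * k2 ^ 2 + k1 ^ 2 * k2 ^ 2 * θ * s)) /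
        (k1 ^ 2 * k2 ^ 2 * (θ * k2 ^ 2 + s + θ * (1 - (k1 ^ 2 + k2 ^ 2)))) with hBdef
  have hat : Real.arctan A < Real.arctan B := Real.arctan_strictMono hAB
  have hatB0 : 0 < Real.arctan B := by
    have := Real.arctan_strictMono hBpos
    rwa [Real.arctan_zero] at this
  have hatBlt : Real.arctan B < Real.pi / 2 := Real.arctan_lt_pi_div_two B
  have hatAgt : -(Real.pi / 2) < Real.arctan A := Real.neg_pi_div_two_lt_arctan A
  have hr1 : 1 < k2 / k1 := (one_lt_div k1pos).mpr hk12
  constructor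
  · -- lower bound
    have l1 : (1 / Real.pi) * Real.arctan A > (1 / Real.pi) * (-(Real.pi / 2)) :=
      mul_lt_mul_of_pos_left hatAgt (by positivity)
    have l2 : (k2 / (k1 * Real.pi)) * Real.arctan B < (k2 / (k1 * Real.pi)) * (Real.pi / 2) :=
      mul_lt_mul_of_pos_left hatBlt (by positivity)
    have e1 : (1 / Real.pi) * (-(Real.pi / 2)) = -(1 / 2) := by field_simp
    have e2 : (k2 / (k1 * Real.pi)) * (Real.pi / 2) = k2 / (2 * k1) := by
      rw [div_mul_div_comm, div_eq_div_iff (by positivity) (by positivity)]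
      ring
    have e3 : (1 / 2 : ℝ) * (1 + k2 / k1) = 1 / 2 + k2 / (2 * k1) := by
      field_simp
    rw [e1] at l1
    rw [e2] at l2
    linarith
  · -- upper bound
    have u1 : (1 / Real.pi) * Real.arctan A < (1 / Real.pi) * Real.arctan B :=
      mul_lt_mul_of_pos_left hat (by positivity)
    have u2 : (1 / Real.pi) * Real.arctan B < (k2 / (k1 * Real.pi)) * Real.arctan B := by
      apply mul_lt_mul_of_pos_right _ hatB0
      rw [div_lt_div_iff₀ hπ (by positivity), one_mul]
      exact mul_lt_mul_of_pos_right hk12 hπ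
    have e3 : (1 / 2 : ℝ) * (1 + k2 / k1) = 1 / 2 + k2 / (2 * k1) := by
      field_simp
    linarith
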